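/- Let H and K be finite connected graphs with V(H) ∩ V(K) = {v}, let G = H ∪ K, and let ω be a weight function on E(G). Suppose there are integers a ≥ 2 and b ≥ 0 such that π_t(K_ω, v) = a·t + b for every t ≥ 1. Let G̃ be the graph with vertex set V(H) together with a new vertex u and edge set E(H) ∪ {vu}, weighted by ω̃(vu) = a and ω̃(e) = ω(e) for e ∈ E(H). Then for every goal vertex x ∈ V(H), π(G_ω, x) = π(G̃_ω̃, x) + b. -/

import Mathlib

/-!
Pebbling is linear: a multiset `S` of moves turns `p` into `p + netEffect ω S`, and by the
No-Cycle Lemma `x` can be reached from `p` iff some multiset of moves along edges keeps every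
vertex nonnegative and leaves enough pebbles on `x`. Such a multiset on `G` splits at the cut
vertex `v` into moves inside `H` and moves inside `K`, which interact only through the number of
pebbles the `K`-part delivers to `v`. Since `π_t(K_ω, v) = a t + b`, `s` pebbles on `K - v` can
deliver `⌊(s - b) / a⌋` pebbles to `v`, just as `s - b` pebbles on the pendant vertex `u` can along
an edge of weight `a`. Conversely, `T` pebbles on `u` are simulated by a distribution of size
`a (⌊T / a⌋ + 1) + b - 1` on `K` that cannot deliver `⌊T / a⌋ + 1` pebbles to `v`. Either way
the number of pebbles changes by `b`.
-/

open Finset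

variable {V : Type*}

/-- Applying the pebbling move `m = (v, u)` on `G_ω`: remove `ω v u` pebbles at `v`
and add one pebble at `u`. -/
def moveFn [DecidableEq V] (ω : V → V → ℕ) (m : V × V) (p : V → ℤ) : V → ℤ :=
  fun w => if w = m.1 then p m.1 - ω m.1 m.2 else if w = m.2 then p m.2 + 1 else p w

/-- The pebble function obtained after applying a sequence of pebbling moves. -/
def applyList [DecidableEq V] (ω : V → V → ℕ) : List (V × V) → (V → ℤ) → (V → ℤ)
  | [], p => p
  | m :: l, p => applyList ω l (moveFn ω m p)

/-- A pebbling sequence is executable from `p` if every move is along an edge of `G`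
and every intermediate pebble function is nonnegative. -/
def Executable [DecidableEq V] (G : SimpleGraph V) (ω : V → V → ℕ) :
    (V → ℤ) → List (V × V) → Prop
  | _, [] => True
  | p, m :: l => G.Adj m.1 m.2 ∧ (∀ w, 0 ≤ moveFn ω m p w) ∧ Executable G ω (moveFn ω m p) l

/-- `x` is `t`-reachable from `p` on the weighted graph `G_ω`. -/
def Reaches [DecidableEq V] (G : SimpleGraph V) (ω : V → V → ℕ) (p : V → ℤ) (x : V)
    (t : ℕ) : Prop :=
  ∃ l : List (V × V), Executable G ω p l ∧ (t : ℤ) ≤ applyList ω l p x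

/-- A pebble distribution is a nonnegative pebble function. -/
def IsDistrib (p : V → ℤ) : Prop := ∀ v, 0 ≤ p v

/-- The size of a pebble distribution: the total number of pebbles. -/
def size [Fintype V] (p : V → ℤ) : ℤ := ∑ v, p v

/-- The `t`-pebbling number `π_t(G_ω, x)`: the least `m` such that `x` is `t`-reachable
from every pebble distribution of size `m`. -/
noncomputable def piT [Fintype V] [DecidableEq V] (G : SimpleGraph V) (ω : V → V → ℕ)
    (x : V) (t : ℕ) : ℕ :=
  sInf {m : ℕ | ∀ p : V → ℤ, IsDistrib p → size p = (m : ℤ) → Reaches G ω p x t}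

/-- `p_S` for a multiset `S` of pebbling moves:
`p_S(w) = p(w) + d⁻(w) − ∑ ω(w,u)` over arcs leaving `w`. -/
def applyMS [DecidableEq V] (ω : V → V → ℕ) (S : Multiset (V × V)) (p : V → ℤ) : V → ℤ :=
  fun w => p w + (Multiset.card (S.filter (fun m => m.2 = w)) : ℤ)
    - ((S.filter (fun m => m.1 = w)).map (fun m => (ω m.1 m.2 : ℤ))).sum

/-- The transition digraph of `S` contains a directed cycle. -/
def HasCycle (S : Multiset (V × V)) : Prop :=
  ∃ l : List (V × V), l ≠ [] ∧ (l : Multiset (V × V)) ≤ S ∧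
    List.Chain' (fun a b => a.2 = b.1) l ∧
    l.getLast?.map Prod.snd = l.head?.map Prod.fst

/-- A multiset of pebbling moves is acyclic if its transition digraph has no directed cycle. -/
def Acyclic (S : Multiset (V × V)) : Prop := ¬HasCycle S

/-- A list of pebbling moves is regular if each move is an initial move of the multiset of
remaining moves: the source of each move has in-degree zero among the remaining moves. -/
def RegularSeq : List (V × V) → Prop
  | [] => True
  | m :: l => (∀ m' ∈ m :: l, m'.2 ≠ m.1) ∧ RegularSeq l
attribute [local instance] Classical.propDecidable

/-- The graph obtained from the induced subgraph of `G` on `A` by attaching a new pendant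
vertex `u` (the `Sum.inr` vertex) to the vertex `v`. -/
def attachPendant {V : Type*} (G : SimpleGraph V) (A : Set V) (v : V) :
    SimpleGraph (↥A ⊕ Unit) where
  Adj x y :=
    match x, y with
    | Sum.inl a, Sum.inl b => G.Adj a b
    | Sum.inl a, Sum.inr _ => (a : V) = v
    | Sum.inr _, Sum.inl b => (b : V) = v
    | Sum.inr _, Sum.inr _ => False
  symm := by
    refine ⟨?_⟩
    rintro (a | u) (b | u') h
    · exact G.symm.symm _ _ h
    · exact h
    · exact h
    · exact h
  loopless := by
    refine ⟨?_⟩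
    rintro (a | u) h
    · exact G.loopless.irrefl a h
    · exact h

/-- Weight function on the graph with an attached pendant vertex: the new edge has
weight `a`, the old edges keep their weight. -/
def attachWeight {V : Type*} (ω : V → V → ℕ) (A : Set V) (a : ℕ) :
    ↥A ⊕ Unit → ↥A ⊕ Unit → ℕ
  | Sum.inl b, Sum.inl c => ω b c
  | Sum.inl _, Sum.inr _ => a
  | Sum.inr _, Sum.inl _ => a
  | Sum.inr _, Sum.inr _ => 0

open Function

section MoveEffect

variable {V : Type*} [DecidableEq V] (ω : V → V → ℕ)

def moveEffect (m : V × V) : V → ℤ :=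
  Pi.single m.2 1 - Pi.single m.1 (ω m.1 m.2 : ℤ)

def netEffect (S : Multiset (V × V)) : V → ℤ :=
  (S.map (moveEffect ω)).sum

lemma netEffect_add (S T : Multiset (V × V)) :
    netEffect ω (S + T) = netEffect ω S + netEffect ω T := by
  simp [netEffect]

lemma netEffect_replicate (k : ℕ) (m : V × V) :
    netEffect ω (Multiset.replicate k m) = k • moveEffect ω m := by
  simp [netEffect]

lemma applyMS_eq_add_netEffect (S : Multiset (V × V)) (p : V → ℤ) :
    applyMS ω S p = p + netEffect ω S := by
  induction S using Multiset.induction_on with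
  | empty => funext w; simp [applyMS, netEffect]
  | cons m S ih =>
    funext w
    have ihw := congrFun ih w
    clear ih
    simp only [applyMS, netEffect, Pi.add_apply, Multiset.map_cons, Multiset.sum_cons,
      Multiset.filter_cons, Multiset.card_add, Multiset.map_add, Multiset.sum_add, moveEffect,
      Pi.sub_apply, Pi.single_apply] at ihw ⊢
    by_cases h2 : m.2 = w <;> by_cases h1 : m.1 = w <;>
      simp [h1, h2, eq_comm (a := w)] <;> linarith

lemma applyMS_add (S T : Multiset (V × V)) (p q : V → ℤ) :
    applyMS ω (S + T) (p + q) = applyMS ω S p + applyMS ω T q := by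
  simp only [applyMS_eq_add_netEffect, netEffect_add]
  abel

lemma moveFn_eq_add_moveEffect {m : V × V} (hm : m.1 ≠ m.2) (p : V → ℤ) :
    moveFn ω m p = p + moveEffect ω m := by
  funext w
  simp only [moveFn, moveEffect, Pi.add_apply, Pi.sub_apply, Pi.single_apply]
  by_cases h1 : w = m.1
  · subst h1; simp [hm, sub_eq_add_neg]
  · by_cases h2 : w = m.2
    · subst h2; simp [h1]
    · simp [h1, h2]

lemma applyMS_cons {m : V × V} (hm : m.1 ≠ m.2) (S : Multiset (V × V)) (p : V → ℤ) :
    applyMS ω (m ::ₘ S) p = applyMS ω S (moveFn ω m p) := by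
  simp [applyMS_eq_add_netEffect, moveFn_eq_add_moveEffect ω hm, netEffect, add_assoc]

lemma applyList_eq_applyMS :
    ∀ (l : List (V × V)) (p : V → ℤ), (∀ m ∈ l, m.1 ≠ m.2) →
      applyList ω l p = applyMS ω (l : Multiset (V × V)) p
  | [], p, _ => by simp [applyList, applyMS_eq_add_netEffect, netEffect]
  | m :: l, p, h => by
    rw [applyList, applyList_eq_applyMS l _ fun m' hm' => h m' (List.mem_cons_of_mem _ hm'),
      ← applyMS_cons ω (h m List.mem_cons_self)]
    rfl

variable {W : Type*} [DecidableEq W] {f : W → V}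

lemma netEffect_map (hf : Injective f) (S : Multiset (W × W)) :
    netEffect ω (S.map (Prod.map f f)) = extend f (netEffect (fun c d => ω (f c) (f d)) S) 0 := by
  induction S using Multiset.induction_on with
  | empty => simp [netEffect, extend_zero]
  | cons m S ih =>
    have hmove : moveEffect ω (Prod.map f f m) =
        extend f (moveEffect (fun c d => ω (f c) (f d)) m) 0 := by
      funext w
      by_cases hw : ∃ c, f c = w
      · obtain ⟨c, rfl⟩ := hw
        simp [hf.extend_apply, moveEffect, Pi.single_apply, hf.eq_iff]
      · rw [extend_apply' _ _ _ hw]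
        simp only [not_exists] at hw
        simp [moveEffect, fun c => Ne.symm (hw c)]
    simp only [netEffect] at ih ⊢
    rw [Multiset.map_cons, Multiset.map_cons, Multiset.map_cons, Multiset.sum_cons,
      Multiset.sum_cons, ih, hmove, ← extend_add, add_zero]

lemma applyMS_map (hf : Injective f) (S : Multiset (W × W)) (p : W → ℤ) :
    applyMS ω (S.map (Prod.map f f)) (extend f p 0) =
      extend f (applyMS (fun c d => ω (f c) (f d)) S p) 0 := by
  rw [applyMS_eq_add_netEffect, applyMS_eq_add_netEffect, netEffect_map ω hf, ← extend_add,
    add_zero]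

end MoveEffect

section Executable

variable {V : Type*} [DecidableEq V] {G : SimpleGraph V} {ω : V → V → ℕ}

lemma applyList_append (l₁ l₂ : List (V × V)) (p : V → ℤ) :
    applyList ω (l₁ ++ l₂) p = applyList ω l₂ (applyList ω l₁ p) := by
  induction l₁ generalizing p with
  | nil => rfl
  | cons m l ih => exact ih _

lemma moveFn_mono (m : V × V) : Monotone (moveFn ω m) := by
  intro p q hpq w
  unfold moveFn
  split_ifs
  · linarith [hpq m.1]
  · linarith [hpq m.2]
  · exact hpq w

namespace Executable

lemma adj {l : List (V × V)} {p : V → ℤ} (h : Executable G ω p l) : ∀ m ∈ l, G.Adj m.1 m.2 := by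
  induction l generalizing p with
  | nil => simp
  | cons m l ih =>
    rintro m' (_ | ⟨_, hm'⟩)
    exacts [h.1, ih h.2.2 m' hm']

lemma isDistrib {l : List (V × V)} {p : V → ℤ} (h : Executable G ω p l) (hp : IsDistrib p) :
    IsDistrib (applyList ω l p) := by
  induction l generalizing p with
  | nil => exact hp
  | cons m l ih => exact ih h.2.2 h.2.1

lemma append {l₁ l₂ : List (V × V)} {p : V → ℤ} (h₁ : Executable G ω p l₁)
    (h₂ : Executable G ω (applyList ω l₁ p) l₂) : Executable G ω p (l₁ ++ l₂) := by
  induction l₁ generalizing p with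
  | nil => exact h₂
  | cons m l ih => exact ⟨h₁.1, h₁.2.1, ih h₁.2.2 h₂⟩

lemma mono {l : List (V × V)} {p q : V → ℤ} (hpq : p ≤ q) (h : Executable G ω p l) :
    Executable G ω q l ∧ applyList ω l p ≤ applyList ω l q := by
  induction l generalizing p q with
  | nil => exact ⟨trivial, hpq⟩
  | cons m l ih =>
    have hm := moveFn_mono (ω := ω) m hpq
    obtain ⟨hq, hle⟩ := ih hm h.2.2
    exact ⟨⟨h.1, fun w => (h.2.1 w).trans (hm w), hq⟩, hle⟩

end Executable

lemma Reaches.mono {p q : V → ℤ} {x : V} {t : ℕ} (hpq : p ≤ q) (h : Reaches G ω p x t) :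
    Reaches G ω q x t := by
  obtain ⟨l, hl, hx⟩ := h
  obtain ⟨hl', hle⟩ := hl.mono hpq
  exact ⟨l, hl', hx.trans (hle x)⟩

end Executable

section NoCycle

variable {V : Type*} [DecidableEq V] {ω : V → V → ℕ}

omit [DecidableEq V] in
lemma map_snd_eq_of_isChain : ∀ (m : V × V) (l : List (V × V)),
    (m :: l).IsChain (fun a b => a.2 = b.1) →
      (m :: l).map Prod.snd = l.map Prod.fst ++ [((m :: l).getLast (List.cons_ne_nil _ _)).2]
  | m, [], _ => rfl
  | m, m' :: l, h => by
    rw [List.isChain_cons_cons] at h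
    rw [List.map_cons, map_snd_eq_of_isChain m' l h.2, h.1, List.getLast_cons_cons]
    rfl

omit [DecidableEq V] in
lemma map_snd_perm_map_fst_of_isCycle {l : List (V × V)} (hc : l.IsChain (fun a b => a.2 = b.1))
    (hcl : l.getLast?.map Prod.snd = l.head?.map Prod.fst) :
    (l.map Prod.snd).Perm (l.map Prod.fst) := by
  cases l with
  | nil => rfl
  | cons m l =>
    rw [map_snd_eq_of_isChain m l hc]
    rw [List.getLast?_eq_some_getLast (List.cons_ne_nil _ _)] at hcl
    simp only [Option.map_some, List.head?_cons, Option.some.injEq] at hcl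
    rw [hcl, List.map_cons]
    exact List.perm_append_singleton _ _

/-- On a closed trail every vertex is left as often as it is entered, and each exit costs at
least one pebble. -/
lemma applyMS_le_of_isCycle {l : List (V × V)} (hc : l.IsChain (fun a b => a.2 = b.1))
    (hcl : l.getLast?.map Prod.snd = l.head?.map Prod.fst) (hω : ∀ m ∈ l, 1 ≤ ω m.1 m.2)
    (p : V → ℤ) : applyMS ω (l : Multiset (V × V)) p ≤ p := by
  intro w
  set leaving := (l : Multiset (V × V)).filter (fun m => m.1 = w)
  have hcount : ((l : Multiset (V × V)).filter (fun m => m.2 = w)).card = leaving.card := by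
    simpa [leaving, List.filter_map, Function.comp_def, List.countP_eq_length_filter] using
      congrArg (Multiset.countP (· = w))
        (Multiset.coe_eq_coe.2 (map_snd_perm_map_fst_of_isCycle hc hcl))
  have hcost : (leaving.card : ℤ) ≤ (leaving.map (fun m => (ω m.1 m.2 : ℤ))).sum := by
    simpa using Multiset.card_nsmul_le_sum (s := leaving.map (fun m => (ω m.1 m.2 : ℤ))) (a := 1)
      (by simpa [leaving] using fun b hb => hω (w, b) hb)
  simp only [applyMS, hcount]
  linarith

lemma exists_acyclic_le (p : V → ℤ) (S : Multiset (V × V)) (hω : ∀ m ∈ S, 1 ≤ ω m.1 m.2) :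
    ∃ T ≤ S, Acyclic T ∧ applyMS ω S p ≤ applyMS ω T p := by
  induction S using Multiset.strongInductionOn with
  | ih S ih =>
    by_cases hS : Acyclic S
    · exact ⟨S, le_rfl, hS, le_rfl⟩
    obtain ⟨l, hne, hle, hc, hcl⟩ := not_not.1 hS
    have hl : (l : Multiset (V × V)) ≠ 0 := by simpa using hne
    have hlt : S - l < S := tsub_le_self.lt_of_ne fun h => hl (by
      simpa [h] using tsub_add_cancel_of_le hle)
    obtain ⟨T, hT, hTa, hST⟩ := ih (S - l) hlt fun m hm => hω m (Multiset.mem_of_le tsub_le_self hm)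
    refine ⟨T, hT.trans tsub_le_self, hTa, le_trans ?_ hST⟩
    have hcycle := applyMS_le_of_isCycle hc hcl
      (fun m hm => hω m (Multiset.mem_of_le hle (Multiset.mem_coe.2 hm))) 0
    calc applyMS ω S p = applyMS ω (S - l + l) (p + 0) := by
          rw [tsub_add_cancel_of_le hle, add_zero]
      _ = applyMS ω (S - l) p + applyMS ω l 0 := applyMS_add ω _ _ _ _
      _ ≤ applyMS ω (S - l) p := add_le_of_nonpos_right hcycle

omit [DecidableEq V] in
lemma Acyclic.mono {S T : Multiset (V × V)} (hTS : T ≤ S) (hS : Acyclic S) : Acyclic T :=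
  fun ⟨l, hne, hle, hc, hcl⟩ => hS ⟨l, hne, hle.trans hTS, hc, hcl⟩

omit [DecidableEq V] in
/-- The first move of a longest trail inside `S` is a source: a predecessor would either extend
the trail or close a cycle. -/
lemma Acyclic.exists_source {S : Multiset (V × V)} (hA : Acyclic S) (hS : S ≠ 0) :
    ∃ m ∈ S, ∀ m' ∈ S, m'.2 ≠ m.1 := by
  classical
  let HasTrail : ℕ → Prop := fun n => ∃ l : List (V × V), l.length = n ∧ l ≠ [] ∧
    (l : Multiset (V × V)) ≤ S ∧ l.IsChain (fun a b => a.2 = b.1)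
  obtain ⟨m₀, hm₀⟩ := Multiset.exists_mem_of_ne_zero hS
  have h1 : HasTrail 1 :=
    ⟨[m₀], rfl, List.cons_ne_nil _ _, by simpa using hm₀, List.isChain_singleton m₀⟩
  obtain ⟨l, hlen, hne, hle, hc⟩ := Nat.findGreatest_spec (Multiset.card_pos.2 hS) h1
  refine ⟨l.head hne, Multiset.mem_of_le hle (by simp [List.head_mem]), fun m' hm' heq => ?_⟩
  by_cases hml : m' ∈ l
  · obtain ⟨c, d, rfl⟩ := List.append_of_mem hml
    refine hA ⟨c ++ [m'], by simp, le_trans ?_ hle, ?_, ?_⟩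
    · exact Multiset.coe_le.2 (List.Sublist.subperm (by simp))
    · exact (List.isChain_append.1 (by simpa using hc)).1
    · rw [List.getLast?_concat]
      cases c <;> simp_all
  · have hcons : m' ::ₘ (l : Multiset (V × V)) ≤ S :=
      (Multiset.cons_le_of_notMem (by simpa using hml)).2 ⟨hm', hle⟩
    have hc' : (m' :: l).IsChain (fun a b => a.2 = b.1) := hc.cons fun y hy => by
      rw [List.head?_eq_some_head hne, Option.mem_some_iff] at hy
      rw [← hy, heq]
    exact Nat.findGreatest_is_greatest (P := HasTrail) (Nat.lt_succ_self _)
      (by simpa [hlen] using Multiset.card_le_card hcons)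
      ⟨m' :: l, by simp [hlen], List.cons_ne_nil _ _, hcons, hc'⟩

end NoCycle

section Multisets

variable {V : Type*} [DecidableEq V] {G : SimpleGraph V} {ω : V → V → ℕ}

lemma applyMS_le_of_source {S : Multiset (V × V)} {m : V × V} (hm : m ∈ S)
    (hsrc : ∀ m' ∈ S, m'.2 ≠ m.1) (p : V → ℤ) :
    applyMS ω S p m.1 ≤ p m.1 - ω m.1 m.2 := by
  have hin : S.filter (fun m' => m'.2 = m.1) = 0 := Multiset.filter_eq_nil.2 hsrc
  have hout : (ω m.1 m.2 : ℤ) ≤ ((S.filter (fun m' => m'.1 = m.1)).map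
      (fun m' => (ω m'.1 m'.2 : ℤ))).sum :=
    Multiset.single_le_sum (by simp) _ (Multiset.mem_map_of_mem _ (by simpa using hm))
  simp only [applyMS, hin, Multiset.card_zero, Nat.cast_zero]
  linarith

lemma exists_executable_of_acyclic (S : Multiset (V × V)) (hadj : ∀ m ∈ S, G.Adj m.1 m.2)
    (hA : Acyclic S) {p : V → ℤ} (hp : IsDistrib p) (hS : IsDistrib (applyMS ω S p)) :
    ∃ l : List (V × V), (l : Multiset (V × V)) = S ∧ Executable G ω p l := by
  induction S using Multiset.strongInductionOn generalizing p with
  | ih S ih =>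
    rcases eq_or_ne S 0 with rfl | hS0
    · exact ⟨[], rfl, trivial⟩
    obtain ⟨m, hm, hsrc⟩ := hA.exists_source hS0
    have hm12 : m.1 ≠ m.2 := (hadj m hm).ne
    have hrest : applyMS ω (S.erase m) (moveFn ω m p) = applyMS ω S p := by
      rw [← applyMS_cons ω hm12, Multiset.cons_erase hm]
    have hmove : IsDistrib (moveFn ω m p) := by
      intro w
      unfold moveFn
      split_ifs
      · linarith [hS m.1, applyMS_le_of_source (ω := ω) hm hsrc p]
      · linarith [hp m.2]
      · exact hp w
    obtain ⟨l, hl, hex⟩ := ih _ (Multiset.erase_lt.2 hm)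
      (fun m' hm' => hadj m' (Multiset.mem_of_mem_erase hm')) (hA.mono (Multiset.erase_le m S))
      hmove (hrest ▸ hS)
    exact ⟨m :: l, by rw [← Multiset.cons_coe, hl, Multiset.cons_erase hm], hadj m hm, hmove, hex⟩

/-- The No-Cycle Lemma: cycles can be cancelled, and an acyclic multiset of moves can be ordered
into an executable sequence. -/
lemma reaches_iff_exists_multiset (hω : ∀ u w, G.Adj u w → 1 ≤ ω u w) {p : V → ℤ}
    (hp : IsDistrib p) {x : V} {t : ℕ} :
    Reaches G ω p x t ↔ ∃ S : Multiset (V × V), (∀ m ∈ S, G.Adj m.1 m.2) ∧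
      IsDistrib (applyMS ω S p) ∧ (t : ℤ) ≤ applyMS ω S p x := by
  constructor
  · rintro ⟨l, hex, hx⟩
    have hl := applyList_eq_applyMS ω l p fun m hm => (hex.adj m hm).ne
    exact ⟨l, fun m hm => hex.adj m hm, hl ▸ hex.isDistrib hp, hl ▸ hx⟩
  · rintro ⟨S, hadj, hS, hx⟩
    obtain ⟨T, hTS, hT, hle⟩ := exists_acyclic_le p S fun m hm => hω _ _ (hadj m hm)
    have hTadj : ∀ m ∈ T, G.Adj m.1 m.2 := fun m hm => hadj m (Multiset.mem_of_le hTS hm)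
    obtain ⟨l, rfl, hex⟩ :=
      exists_executable_of_acyclic T hTadj hT hp fun w => (hS w).trans (hle w)
    refine ⟨l, hex, ?_⟩
    rw [applyList_eq_applyMS ω l p fun m hm => (hTadj m hm).ne]
    exact hx.trans (hle x)

lemma applyMS_le_of_not_reaches (hω : ∀ u w, G.Adj u w → 1 ≤ ω u w) {q : V → ℤ}
    (hq : IsDistrib q) {y : V} {t : ℕ} (hn : ¬Reaches G ω q y (t + 1)) {S : Multiset (V × V)}
    (hadj : ∀ m ∈ S, G.Adj m.1 m.2) (hS : ∀ w, w ≠ y → 0 ≤ applyMS ω S q w) :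
    applyMS ω S q y ≤ t := by
  by_contra! hlt
  refine hn ((reaches_iff_exists_multiset hω hq).2 ⟨S, hadj, fun w => ?_, by push_cast; omega⟩)
  rcases eq_or_ne w y with rfl | hw
  · exact (Int.natCast_nonneg t).trans hlt.le
  · exact hS w hw

end Multisets

section PebblingNumber

variable {V : Type*} [Fintype V] [DecidableEq V] {G : SimpleGraph V} {ω : V → V → ℕ}

variable (G ω) in
def PebblesSuffice (x : V) (t m : ℕ) : Prop :=
  ∀ p : V → ℤ, IsDistrib p → size p = m → Reaches G ω p x t

lemma exists_le_size_eq {p : V → ℤ} (hp : IsDistrib p) {k : ℕ} (hk : (k : ℤ) ≤ size p) :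
    ∃ q ≤ p, IsDistrib q ∧ size q = k := by
  obtain ⟨d, hd⟩ : ∃ d : ℕ, size p = k + d := ⟨(size p - k).toNat, by omega⟩
  induction d generalizing p with
  | zero => exact ⟨p, le_rfl, hp, by simpa using hd⟩
  | succ d ih =>
    obtain ⟨y, hy⟩ : ∃ y, 0 < p y := by
      by_contra! h
      have : size p ≤ 0 := Finset.sum_nonpos fun y _ => h y
      omega
    have hsize : size (p - Pi.single y 1) = size p - 1 := by
      simp [size, Finset.sum_sub_distrib]
    have hd' : IsDistrib (p - Pi.single y 1) := fun w => by
      rcases eq_or_ne w y with rfl | hw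
      · simp; omega
      · simpa [hw] using hp w
    obtain ⟨q, hq, hqd, hqs⟩ := ih hd' (by rw [hsize]; omega) (by rw [hsize, hd]; push_cast; ring)
    exact ⟨q, hq.trans (sub_le_self _ (Pi.single_nonneg.2 zero_le_one)), hqd, hqs⟩

lemma reaches_of_le_size {x : V} {t m : ℕ} (h : PebblesSuffice G ω x t m) {p : V → ℤ}
    (hp : IsDistrib p) (hm : (m : ℤ) ≤ size p) : Reaches G ω p x t := by
  obtain ⟨q, hqp, hq, hqs⟩ := exists_le_size_eq hp hm
  exact (h q hq hqs).mono hqp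

omit [Fintype V] in
lemma exists_executable_of_adj {y z : V} (hyz : G.Adj y z) (c : ℕ) {p : V → ℤ}
    (hp : IsDistrib p) (hc : (c * ω y z : ℤ) ≤ p y) :
    ∃ l, Executable G ω p l ∧ p z + c ≤ applyList ω l p z := by
  induction c generalizing p with
  | zero => exact ⟨[], trivial, by simp [applyList]⟩
  | succ c ih =>
    have hy : moveFn ω (y, z) p y = p y - ω y z := by simp [moveFn]
    have hz : moveFn ω (y, z) p z = p z + 1 := by simp [moveFn, hyz.ne.symm]
    have hmove : IsDistrib (moveFn ω (y, z) p) := fun w => by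
      unfold moveFn
      split_ifs
      · push_cast at hc; nlinarith
      · linarith [hp z]
      · exact hp w
    obtain ⟨l, hl, hlz⟩ := ih hmove (by rw [hy]; push_cast at hc; linarith)
    exact ⟨(y, z) :: l, ⟨hyz, hmove, hl⟩, by simp only [applyList]; push_cast; linarith⟩

omit [Fintype V] in
lemma exists_reaches_of_walk {y x : V} (W : G.Walk y x) :
    ∃ N : ℕ, ∀ p : V → ℤ, IsDistrib p → (N : ℤ) ≤ p y → Reaches G ω p x 1 := by
  induction W with
  | nil => exact ⟨1, fun p _ h => ⟨[], trivial, h⟩⟩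
  | @cons y z x hyz W ih =>
    obtain ⟨N, hN⟩ := ih
    refine ⟨N * ω y z, fun p hp hy => ?_⟩
    obtain ⟨l₁, hl₁, hz⟩ := exists_executable_of_adj hyz N hp (by exact_mod_cast hy)
    obtain ⟨l₂, hl₂, hx⟩ := hN _ (hl₁.isDistrib hp) (by linarith [hp z])
    exact ⟨l₁ ++ l₂, hl₁.append hl₂, by rwa [applyList_append]⟩

lemma exists_pebblesSuffice_of_connected (hG : G.Connected) (x : V) :
    ∃ m, PebblesSuffice G ω x 1 m := by
  choose N hN using fun y => exists_reaches_of_walk (ω := ω) (hG.preconnected y x).some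
  refine ⟨∑ y, N y, fun p hp hs => ?_⟩
  obtain ⟨y, -, hy⟩ := Finset.exists_le_of_sum_le (s := Finset.univ) ⟨x, Finset.mem_univ x⟩
    (f := fun y => (N y : ℤ)) (g := p) (by unfold size at hs; rw [hs]; push_cast; rfl)
  exact hN y p hp hy

omit [Fintype V] in
lemma not_reaches_zero (hω : ∀ u w, G.Adj u w → 1 ≤ ω u w) (x : V) {t : ℕ} (ht : 1 ≤ t) :
    ¬Reaches G ω 0 x t := by
  rintro ⟨_ | ⟨m, l⟩, hex, hx⟩
  · simp [applyList] at hx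
    omega
  · have := hex.2.1 m.1
    simp [moveFn] at this
    have := hω _ _ hex.1
    omega

omit [Fintype V] in
lemma reaches_zero {p : V → ℤ} (hp : IsDistrib p) (x : V) : Reaches G ω p x 0 :=
  ⟨[], trivial, hp x⟩

lemma piT_le {x : V} {t m : ℕ} (h : PebblesSuffice G ω x t m) : piT G ω x t ≤ m :=
  Nat.sInf_le h

lemma pebblesSuffice_piT {x : V} {t : ℕ} (h : ∃ m, PebblesSuffice G ω x t m) :
    PebblesSuffice G ω x t (piT G ω x t) :=
  Nat.sInf_mem h

lemma exists_not_reaches_of_lt_piT {x : V} {t m : ℕ} (h : m < piT G ω x t) :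
    ∃ p : V → ℤ, IsDistrib p ∧ size p = m ∧ ¬Reaches G ω p x t := by
  simpa using Nat.notMem_of_lt_sInf h

lemma reaches_sub_div_of_piT_eq_add {x : V} {a b : ℕ} (ha : 1 ≤ a)
    (hpi : ∀ t : ℕ, 1 ≤ t → piT G ω x t = a * t + b) {p : V → ℤ} (hp : IsDistrib p) {s : ℕ}
    (hs : (s : ℤ) = size p) : Reaches G ω p x ((s - b) / a) := by
  rcases Nat.eq_zero_or_pos ((s - b) / a) with h0 | hpos
  · rw [h0]; exact reaches_zero hp x
  have hpi' := hpi _ hpos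
  have hpiT : 0 < piT G ω x ((s - b) / a) := by rw [hpi']; positivity
  refine reaches_of_le_size (pebblesSuffice_piT (Nat.nonempty_of_pos_sInf hpiT)) hp ?_
  have := Nat.mul_div_le (s - b) a
  have := Nat.mul_le_mul_left a hpos
  rw [hpi', ← hs]
  omega

end PebblingNumber

section Gluing

variable {V : Type*} [DecidableEq V] (ω : V → V → ℕ) {A B : Set V} {v : V}

def unionMoves (SA : Multiset (A × A)) (SB : Multiset (B × B)) : Multiset (V × V) :=
  SA.map (Prod.map (↑) (↑)) + SB.map (Prod.map (↑) (↑))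

omit [DecidableEq V] in
lemma extend_val_apply_of_mem (g : A → ℤ) {w : V} (hw : w ∈ A) :
    extend Subtype.val g 0 w = g ⟨w, hw⟩ :=
  Subtype.val_injective.extend_apply g 0 ⟨w, hw⟩

omit [DecidableEq V] in
lemma extend_val_apply_of_notMem (g : A → ℤ) {w : V} (hw : w ∉ A) :
    extend Subtype.val g 0 w = 0 :=
  extend_apply' _ _ _ fun ⟨c, hc⟩ => hw (hc ▸ c.2)

omit [DecidableEq V] in
lemma eq_of_mem_inter (hInter : A ∩ B = {v}) {w : V} (hwA : w ∈ A) (hwB : w ∈ B) : w = v :=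
  Set.mem_singleton_iff.1 (hInter ▸ ⟨hwA, hwB⟩)

omit [DecidableEq V] in
lemma mem_of_notMem_union (hUnion : A ∪ B = Set.univ) {w : V} (hw : w ∉ A) : w ∈ B :=
  ((Set.mem_union _ _ _).1 (hUnion ▸ Set.mem_univ w)).resolve_left hw

lemma eq_extend_add_extend (hUnion : A ∪ B = Set.univ) (hInter : A ∩ B = {v}) (hvA : v ∈ A)
    (p : V → ℤ) :
    p = extend Subtype.val (fun c : A => p c) 0 +
      extend Subtype.val (fun c : B => if (c : V) = v then 0 else p c) 0 := by
  funext w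
  by_cases hw : w ∈ A
  · rw [Pi.add_apply, extend_val_apply_of_mem _ hw]
    by_cases hwB : w ∈ B
    · obtain rfl := eq_of_mem_inter hInter hw hwB
      simp [extend_val_apply_of_mem _ hwB]
    · simp [extend_val_apply_of_notMem _ hwB]
  · have hwv : w ≠ v := fun h => hw (h ▸ hvA)
    rw [Pi.add_apply, extend_val_apply_of_notMem _ hw,
      extend_val_apply_of_mem _ (mem_of_notMem_union hUnion hw)]
    simp [hwv]

omit [DecidableEq V] in
lemma isDistrib_extend {W : Type*} {f : W → V} {g : W → ℤ} (hg : IsDistrib g) :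
    IsDistrib (extend f g 0) := fun w => by
  by_cases h : ∃ c, f c = w
  · rw [extend_def, dif_pos h]; exact hg _
  · rw [extend_apply' _ _ _ h]; rfl

omit [DecidableEq V] in
lemma size_extend {W : Type*} [Fintype V] [Fintype W] {f : W → V} (hf : Injective f)
    (g : W → ℤ) : size (extend f g 0) = size g :=
  (Fintype.sum_of_injective f hf g (extend f g 0) (fun _ hw => extend_apply' _ _ _ hw)
    fun _ => (hf.extend_apply _ _ _).symm).symm

lemma applyMS_unionMoves (SA : Multiset (A × A)) (SB : Multiset (B × B)) (pA : A → ℤ) (pB : B → ℤ) :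
    applyMS ω (unionMoves SA SB)
        (extend Subtype.val pA 0 + extend Subtype.val pB 0) =
      extend Subtype.val (applyMS (fun c d : A => ω c d) SA pA) 0 +
        extend Subtype.val (applyMS (fun c d : B => ω c d) SB pB) 0 := by
  rw [unionMoves, applyMS_add, applyMS_map ω Subtype.val_injective,
    applyMS_map ω Subtype.val_injective]

lemma applyMS_unionMoves_apply_of_mem (hInter : A ∩ B = {v}) (hvB : v ∈ B) (SA : Multiset (A × A))
    (SB : Multiset (B × B)) (pA : A → ℤ) (pB : B → ℤ) {w : V} (hw : w ∈ A) :
    applyMS ω (unionMoves SA SB)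
        (extend Subtype.val pA 0 + extend Subtype.val pB 0) w =
      applyMS (fun c d : A => ω c d) SA pA ⟨w, hw⟩ +
        if w = v then applyMS (fun c d : B => ω c d) SB pB ⟨v, hvB⟩ else 0 := by
  rw [applyMS_unionMoves, Pi.add_apply, extend_val_apply_of_mem _ hw]
  by_cases hwv : w = v
  · subst hwv; rw [extend_val_apply_of_mem _ hvB, if_pos rfl]
  · rw [extend_val_apply_of_notMem _ fun hwB => hwv (eq_of_mem_inter hInter hw hwB), if_neg hwv]

lemma applyMS_unionMoves_apply_of_notMem (hUnion : A ∪ B = Set.univ) (SA : Multiset (A × A))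
    (SB : Multiset (B × B)) (pA : A → ℤ) (pB : B → ℤ) {w : V} (hw : w ∉ A) :
    applyMS ω (unionMoves SA SB)
        (extend Subtype.val pA 0 + extend Subtype.val pB 0) w =
      applyMS (fun c d : B => ω c d) SB pB ⟨w, mem_of_notMem_union hUnion hw⟩ := by
  rw [applyMS_unionMoves, Pi.add_apply, extend_val_apply_of_notMem _ hw, zero_add,
    extend_val_apply_of_mem]

omit [DecidableEq V] in
lemma exists_eq_unionMoves {G : SimpleGraph V}
    (hedges : ∀ u w : V, G.Adj u w → (u ∈ A ∧ w ∈ A) ∨ (u ∈ B ∧ w ∈ B)) {S : Multiset (V × V)}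
    (hS : ∀ m ∈ S, G.Adj m.1 m.2) :
    ∃ (SA : Multiset (A × A)) (SB : Multiset (B × B)), (∀ m ∈ SA, (G.induce A).Adj m.1 m.2) ∧
      (∀ m ∈ SB, (G.induce B).Adj m.1 m.2) ∧
      S = unionMoves SA SB := by
  induction S using Multiset.induction_on with
  | empty => exact ⟨0, 0, by simp, by simp, by simp [unionMoves]⟩
  | cons m S ih =>
    obtain ⟨SA, SB, hSA, hSB, rfl⟩ := ih fun m' hm' => hS m' (Multiset.mem_cons_of_mem hm')
    have hm := hS m (Multiset.mem_cons_self _ _)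
    rcases hedges _ _ hm with ⟨h₁, h₂⟩ | ⟨h₁, h₂⟩
    · refine ⟨(⟨m.1, h₁⟩, ⟨m.2, h₂⟩) ::ₘ SA, SB, ?_, hSB, by simp [unionMoves]⟩
      intro m' hm'
      rcases Multiset.mem_cons.1 hm' with rfl | hm'
      exacts [hm, hSA m' hm']
    · refine ⟨SA, (⟨m.1, h₁⟩, ⟨m.2, h₂⟩) ::ₘ SB, hSA, ?_, by simp [unionMoves, Multiset.add_cons]⟩
      intro m' hm'
      rcases Multiset.mem_cons.1 hm' with rfl | hm'
      exacts [hm, hSB m' hm']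

omit [DecidableEq V] in
lemma adj_of_mem_unionMoves {G : SimpleGraph V} {SA : Multiset (A × A)}
    {SB : Multiset (B × B)} (hSA : ∀ m ∈ SA, (G.induce A).Adj m.1 m.2)
    (hSB : ∀ m ∈ SB, (G.induce B).Adj m.1 m.2) :
    ∀ m ∈ unionMoves SA SB, G.Adj m.1 m.2 := by
  simp only [unionMoves, Multiset.mem_add, Multiset.mem_map]
  rintro _ (⟨m, hm, rfl⟩ | ⟨m, hm, rfl⟩)
  exacts [hSA m hm, hSB m hm]

end Gluing

section Pendant

variable {V : Type*} [DecidableEq V] (ω : V → V → ℕ) (a : ℕ) {A : Set V} {v : V} (hvA : v ∈ A)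

def pendantMoves (S₀ : Multiset (A × A)) (k₁ k₂ : ℕ) : Multiset ((A ⊕ Unit) × (A ⊕ Unit)) :=
  S₀.map (Prod.map Sum.inl Sum.inl) + Multiset.replicate k₁ (Sum.inr (), Sum.inl ⟨v, hvA⟩)
    + Multiset.replicate k₂ (Sum.inl ⟨v, hvA⟩, Sum.inr ())

omit [DecidableEq V] in
lemma exists_eq_pendantMoves {G : SimpleGraph V} {S : Multiset ((A ⊕ Unit) × (A ⊕ Unit))}
    (hS : ∀ m ∈ S, (attachPendant G A v).Adj m.1 m.2) :
    ∃ (S₀ : Multiset (A × A)) (k₁ k₂ : ℕ), (∀ m ∈ S₀, (G.induce A).Adj m.1 m.2) ∧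
      S = pendantMoves hvA S₀ k₁ k₂ := by
  induction S using Multiset.induction_on with
  | empty => exact ⟨0, 0, 0, by simp, by simp [pendantMoves]⟩
  | cons m S ih =>
    obtain ⟨S₀, k₁, k₂, hS₀, rfl⟩ := ih fun m' hm' => hS m' (Multiset.mem_cons_of_mem hm')
    have hm := hS m (Multiset.mem_cons_self _ _)
    rcases m with ⟨c | ⟨⟩, d | ⟨⟩⟩
    · refine ⟨(c, d) ::ₘ S₀, k₁, k₂, ?_, by simp [pendantMoves]⟩
      intro m' hm'
      rcases Multiset.mem_cons.1 hm' with rfl | hm'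
      exacts [hm, hS₀ m' hm']
    · obtain rfl : c = ⟨v, hvA⟩ := Subtype.ext hm
      exact ⟨S₀, k₁, k₂ + 1, hS₀,
        by simp [pendantMoves, Multiset.replicate_succ, Multiset.add_cons]⟩
    · obtain rfl : d = ⟨v, hvA⟩ := Subtype.ext hm
      exact ⟨S₀, k₁ + 1, k₂, hS₀,
        by simp [pendantMoves, Multiset.replicate_succ, Multiset.add_cons]⟩
    · exact hm.elim

omit [DecidableEq V] in
lemma attachPendant_adj_of_mem_pendantMoves {G : SimpleGraph V} {S₀ : Multiset (A × A)} {k₁ k₂ : ℕ}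
    (hS₀ : ∀ m ∈ S₀, (G.induce A).Adj m.1 m.2) :
    ∀ m ∈ pendantMoves hvA S₀ k₁ k₂, (attachPendant G A v).Adj m.1 m.2 := by
  simp only [pendantMoves, Multiset.mem_add, Multiset.mem_map, Multiset.mem_replicate]
  rintro _ ((⟨m, hm, rfl⟩ | ⟨-, rfl⟩) | ⟨-, rfl⟩)
  exacts [hS₀ m hm, rfl, rfl]

omit [DecidableEq V] in
lemma one_le_attachWeight {G : SimpleGraph V} (hω : ∀ u w : V, G.Adj u w → 1 ≤ ω u w)
    (ha : 1 ≤ a) : ∀ y z, (attachPendant G A v).Adj y z → 1 ≤ attachWeight ω A a y z := by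
  rintro (c | ⟨⟩) (d | ⟨⟩) h
  exacts [hω _ _ h, ha, ha, h.elim]

lemma applyMS_pendantMoves_inl (S₀ : Multiset (A × A)) (k₁ k₂ : ℕ) (p : A ⊕ Unit → ℤ) (c : A) :
    applyMS (attachWeight ω A a) (pendantMoves hvA S₀ k₁ k₂) p (Sum.inl c) =
      applyMS (fun c d : A => ω c d) S₀ (p ∘ Sum.inl) c
        + if c = ⟨v, hvA⟩ then (k₁ : ℤ) - a * k₂ else 0 := by
  simp only [pendantMoves, applyMS_eq_add_netEffect, netEffect_add,
    netEffect_map _ Sum.inl_injective,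
    netEffect_replicate, Pi.add_apply, Pi.smul_apply, Sum.inl_injective.extend_apply]
  split_ifs with hc <;> simp [moveEffect, attachWeight, hc]
  ring

lemma applyMS_pendantMoves_inr (S₀ : Multiset (A × A)) (k₁ k₂ : ℕ) (p : A ⊕ Unit → ℤ) :
    applyMS (attachWeight ω A a) (pendantMoves hvA S₀ k₁ k₂) p (Sum.inr ()) =
      p (Sum.inr ()) + k₂ - a * k₁ := by
  simp only [pendantMoves, applyMS_eq_add_netEffect, netEffect_add,
    netEffect_map _ Sum.inl_injective,
    netEffect_replicate, Pi.add_apply, Pi.smul_apply]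
  rw [extend_apply' _ _ _ (by simp)]
  simp [moveEffect, attachWeight]
  ring

end Pendant

section CutVertex

variable {V : Type*} [Fintype V] [DecidableEq V] {G : SimpleGraph V} {ω : V → V → ℕ}
  {A B : Set V} {v : V} {a b : ℕ}

lemma sub_mul_le_div {a r k₁ k₂ : ℕ} (ha : 1 ≤ a) (h : (a : ℤ) * k₁ ≤ r + k₂) :
    (k₁ : ℤ) - a * k₂ ≤ ((r / a : ℕ) : ℤ) := by
  have ha' : (1 : ℤ) ≤ a := by exact_mod_cast ha
  rw [Int.natCast_div]
  apply Int.le_ediv_of_mul_le (by positivity)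
  nlinarith [mul_le_mul_of_nonneg_right (one_le_mul_of_one_le_of_one_le ha' ha')
    (Int.natCast_nonneg k₂)]

omit [DecidableEq V] in
lemma size_add (p q : V → ℤ) : size (p + q) = size p + size q :=
  Finset.sum_add_distrib

lemma pebblesSuffice_add_of_attachPendant (hUnion : A ∪ B = Set.univ) (hInter : A ∩ B = {v})
    (hvA : v ∈ A) (hvB : v ∈ B) (hω : ∀ u w : V, G.Adj u w → 1 ≤ ω u w) (ha : 1 ≤ a)
    (hpi : ∀ t : ℕ, 1 ≤ t → piT (G.induce B) (fun c d => ω c.1 d.1) ⟨v, hvB⟩ t = a * t + b)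
    {x : V} (hx : x ∈ A) {m : ℕ}
    (h : PebblesSuffice (attachPendant G A v) (attachWeight ω A a) (Sum.inl ⟨x, hx⟩) 1 m) :
    PebblesSuffice G ω x 1 (m + b) := by
  intro p hp hs
  set pA : A → ℤ := fun c => p c
  set q : B → ℤ := fun c => if (c : V) = v then 0 else p c
  have hq : IsDistrib q := fun c => by dsimp only [q]; split_ifs; exacts [le_rfl, hp c]
  have hsplit : p = extend Subtype.val pA 0 + extend Subtype.val q 0 :=
    eq_extend_add_extend hUnion hInter hvA p
  obtain ⟨s, hs'⟩ : ∃ s : ℕ, (s : ℤ) = size q := ⟨(size q).toNat, Int.toNat_of_nonneg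
    (Finset.sum_nonneg fun c _ => hq c)⟩
  set pt : A ⊕ Unit → ℤ := Sum.elim pA fun _ => ((s - b : ℕ) : ℤ)
  have hpt : IsDistrib pt := by rintro (c | _); exacts [hp c, Int.natCast_nonneg _]
  have hpts : (m : ℤ) ≤ size pt := by
    have h1 : size p = size pA + size q := by
      rw [hsplit, size_add, size_extend Subtype.val_injective, size_extend Subtype.val_injective]
    have h2 : size pt = size pA + ((s - b : ℕ) : ℤ) := by simp [pt, size, Fintype.sum_sum_type]
    omega
  obtain ⟨St, hStadj, hSt, hStx⟩ := (reaches_iff_exists_multiset (one_le_attachWeight ω a hω ha)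
    hpt).1 (reaches_of_le_size h hpt hpts)
  obtain ⟨S₀, k₁, k₂, hS₀, rfl⟩ := exists_eq_pendantMoves hvA hStadj
  have hu := hSt (Sum.inr ())
  rw [applyMS_pendantMoves_inr] at hu
  set r := s - b
  have htrans : (k₁ : ℤ) - a * k₂ ≤ ((r / a : ℕ) : ℤ) :=
    sub_mul_le_div ha (by simp only [pt, Sum.elim_inr] at hu; linarith)
  obtain ⟨SK, hSKadj, hSK, hSKv⟩ := (reaches_iff_exists_multiset (G := G.induce B)
    (ω := fun c d => ω c d) (fun c d h => hω _ _ h) hq).1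
    (reaches_sub_div_of_piT_eq_add ha hpi hq hs')
  have hcmp : ∀ w (hw : w ∈ A),
      applyMS (attachWeight ω A a) (pendantMoves hvA S₀ k₁ k₂) pt (Sum.inl ⟨w, hw⟩) ≤
        applyMS ω (unionMoves S₀ SK) p w := by
    intro w hw
    rw [applyMS_pendantMoves_inl, hsplit, applyMS_unionMoves_apply_of_mem ω hInter hvB _ _ _ _ hw]
    by_cases hwv : w = v
    · subst hwv
      exact add_le_add le_rfl (by simpa using htrans.trans hSKv)
    · simp only [hwv, if_false, Subtype.mk.injEq]
      rfl
  refine (reaches_iff_exists_multiset hω hp).2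
    ⟨_, adj_of_mem_unionMoves hS₀ hSKadj, fun w => ?_, hStx.trans (hcmp x hx)⟩
  by_cases hw : w ∈ A
  · exact (hSt _).trans (hcmp w hw)
  · rw [hsplit, applyMS_unionMoves_apply_of_notMem ω hUnion _ _ _ _ hw]
    exact hSK _

lemma pebblesSuffice_attachPendant_of_add (hUnion : A ∪ B = Set.univ) (hInter : A ∩ B = {v})
    (hvA : v ∈ A) (hvB : v ∈ B)
    (hedges : ∀ u w : V, G.Adj u w → (u ∈ A ∧ w ∈ A) ∨ (u ∈ B ∧ w ∈ B))
    (hω : ∀ u w : V, G.Adj u w → 1 ≤ ω u w) (ha : 1 ≤ a)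
    (hpi : ∀ t : ℕ, 1 ≤ t → piT (G.induce B) (fun c d => ω c.1 d.1) ⟨v, hvB⟩ t = a * t + b)
    {x : V} (hx : x ∈ A) {m m' : ℕ} (h : PebblesSuffice G ω x 1 m) (hm : m ≤ m' + b) :
    PebblesSuffice (attachPendant G A v) (attachWeight ω A a) (Sum.inl ⟨x, hx⟩) 1 m' := by
  intro pb hpb hs
  obtain ⟨T, hT⟩ : ∃ T : ℕ, (T : ℤ) = pb (Sum.inr ()) := ⟨_, Int.toNat_of_nonneg (hpb _)⟩
  have hTN : T < a * (T / a + 1) := mul_comm (T / a + 1) a ▸ Nat.lt_mul_div_succ T ha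
  obtain ⟨qK, hqK, hqKs, hqKn⟩ := exists_not_reaches_of_lt_piT (m := a * (T / a + 1) + b - 1)
    (by rw [hpi (T / a + 1) (Nat.succ_pos _)]; omega)
  set pA : A → ℤ := pb ∘ Sum.inl
  have hp : IsDistrib (extend Subtype.val pA 0 + extend Subtype.val qK 0) := fun w =>
    add_nonneg (isDistrib_extend (fun c => hpb _) w) (isDistrib_extend hqK w)
  have hps : (m : ℤ) ≤ size (extend Subtype.val pA 0 + extend Subtype.val qK 0) := by
    have hpbs : size pb = size pA + T := by simp [size, Fintype.sum_sum_type, hT, pA]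
    rw [size_add, size_extend Subtype.val_injective, size_extend Subtype.val_injective, hqKs]
    omega
  obtain ⟨S, hSadj, hS, hSx⟩ := (reaches_iff_exists_multiset hω hp).1 (reaches_of_le_size h hp hps)
  obtain ⟨SA, SB, hSA, hSB, rfl⟩ := exists_eq_unionMoves hedges hSadj
  have hD : applyMS (fun c d : B => ω c d) SB qK ⟨v, hvB⟩ ≤ ((T / a : ℕ) : ℤ) :=
    applyMS_le_of_not_reaches (G := G.induce B) (fun c d h => hω _ _ h) hqK hqKn hSB
      fun ⟨w, hw⟩ hwv => by
        have hwA : w ∉ A := fun hwA => hwv (Subtype.ext (eq_of_mem_inter hInter hwA hw))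
        simpa [applyMS_unionMoves_apply_of_notMem ω hUnion _ _ _ _ hwA] using hS w
  set k := (applyMS (fun c d : B => ω c d) SB qK ⟨v, hvB⟩).toNat
  have hcmp : ∀ w (hw : w ∈ A),
      applyMS ω (unionMoves SA SB) (extend Subtype.val pA 0 + extend Subtype.val qK 0) w ≤
        applyMS (attachWeight ω A a) (pendantMoves hvA SA k 0) pb (Sum.inl ⟨w, hw⟩) := by
    intro w hw
    rw [applyMS_pendantMoves_inl, applyMS_unionMoves_apply_of_mem ω hInter hvB _ _ _ _ hw]
    by_cases hwv : w = v
    · subst hwv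
      rw [if_pos rfl, if_pos rfl, Nat.cast_zero, mul_zero, sub_zero]
      exact add_le_add le_rfl (Int.self_le_toNat _)
    · simp [hwv, pA]
  refine (reaches_iff_exists_multiset (one_le_attachWeight ω a hω ha) hpb).2
    ⟨_, attachPendant_adj_of_mem_pendantMoves hvA hSA, ?_, hSx.trans (hcmp x hx)⟩
  rintro (⟨w, hw⟩ | ⟨⟩)
  · exact (hS w).trans (hcmp w hw)
  · have hkD : a * k ≤ T :=
      (Nat.mul_le_mul_left a (Int.toNat_le.2 hD)).trans (Nat.mul_div_le T a)
    rw [applyMS_pendantMoves_inr, ← hT]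
    push_cast
    linarith [(show ((a * k : ℕ) : ℤ) ≤ T by exact_mod_cast hkD)]

end CutVertex

theorem statement3_general {V : Type*} [Fintype V] [DecidableEq V]
    (G : SimpleGraph V) (hG : G.Connected)
    (A B : Set V) (v : V)
    (hUnion : A ∪ B = Set.univ) (hInter : A ∩ B = {v})
    (hvA : v ∈ A) (hvB : v ∈ B)
    (hedges : ∀ u w : V, G.Adj u w → (u ∈ A ∧ w ∈ A) ∨ (u ∈ B ∧ w ∈ B))
    (ω : V → V → ℕ)
    (hω : ∀ u w : V, G.Adj u w → 2 ≤ ω u w)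
    (a b : ℕ) (ha : 2 ≤ a)
    (hpi : ∀ t : ℕ, 1 ≤ t →
      piT (G.induce B) (fun c d => ω c.1 d.1) ⟨v, hvB⟩ t = a * t + b)
    (x : V) (hx : x ∈ A) :
    piT G ω x 1 = piT (attachPendant G A v) (attachWeight ω A a) (Sum.inl ⟨x, hx⟩) 1 + b := by
  have hω₁ : ∀ u w, G.Adj u w → 1 ≤ ω u w := fun u w h => one_le_two.trans (hω u w h)
  have ha₁ : 1 ≤ a := one_le_two.trans ha
  have hN : PebblesSuffice G ω x 1 (piT G ω x 1) :=
    pebblesSuffice_piT (exists_pebblesSuffice_of_connected hG x)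
  have hbN : b < piT G ω x 1 := by
    by_contra! hNb
    exact not_reaches_zero (one_le_attachWeight ω a hω₁ ha₁) _ le_rfl
      (pebblesSuffice_attachPendant_of_add hUnion hInter hvA hvB hedges hω₁ ha₁ hpi hx hN
        (m' := 0) (by omega) 0 (fun _ => le_rfl) (by simp [size]))
  have hpendant := pebblesSuffice_attachPendant_of_add hUnion hInter hvA hvB hedges hω₁ ha₁ hpi
    hx hN (m' := piT G ω x 1 - b) (by omega)
  have hle := piT_le (pebblesSuffice_add_of_attachPendant hUnion hInter hvA hvB hω₁ ha₁ hpi hx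
    (pebblesSuffice_piT ⟨_, hpendant⟩))
  have hge := piT_le hpendant
  omega

/-- Cut-vertex reduction: if `G = H ∪ K` with `V(H) ∩ V(K) = {v}`,
`v` a cut vertex, and `π_t(K_ω, v) = a·t + b` for all `t ≥ 1`, then replacing `K` by a
single pendant vertex `u` attached to `v` with edge weight `a` gives
`π(G_ω, x) = π(G̃_ω̃, x) + b` for every goal vertex `x ∈ V(H)`. -/
theorem statement3 {V : Type*} [Fintype V] [DecidableEq V]
    (G : SimpleGraph V) (hG : G.Connected)
    (A B : Set V) (v : V)
    (hUnion : A ∪ B = Set.univ) (hInter : A ∩ B = {v})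
    (hvA : v ∈ A) (hvB : v ∈ B)
    (hedges : ∀ u w : V, G.Adj u w → (u ∈ A ∧ w ∈ A) ∨ (u ∈ B ∧ w ∈ B))
    (hH : (G.induce A).Connected) (hK : (G.induce B).Connected)
    (ω : V → V → ℕ) (hsym : ∀ u w : V, ω u w = ω w u)
    (hω : ∀ u w : V, G.Adj u w → 2 ≤ ω u w)
    (a b : ℕ) (ha : 2 ≤ a)
    (hpi : ∀ t : ℕ, 1 ≤ t →
      piT (G.induce B) (fun c d => ω c.1 d.1) ⟨v, hvB⟩ t = a * t + b)
    (x : V) (hx : x ∈ A) :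
    piT G ω x 1 = piT (attachPendant G A v) (attachWeight ω A a) (Sum.inl ⟨x, hx⟩) 1 + b :=
  statement3_general G hG A B v hUnion hInter hvA hvB hedges ω hω a b ha hpi x hx
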